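/- For any planar lattice Γ ⊆ ℝ² and any coincidence isometry R, the coincidence index equals the denominator: Σ_Γ(R) = den_Γ(R). -/

import Mathlib

noncomputable section

abbrev Euc (d : ℕ) : Type := EuclideanSpace ℝ (Fin d)

/-- Γ is a (full-rank) lattice in ℝ^d: the ℤ-span of an ℝ-basis of ℝ^d. -/
def IsLattice {d : ℕ} (Γ : AddSubgroup (Euc d)) : Prop :=
  ∃ b : Module.Basis (Fin d) ℝ (Euc d),
    Γ = (Submodule.span ℤ (Set.range ⇑b)).toAddSubgroup

/-- Two subgroups are commensurate if their intersection has finite index in both. -/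
def Commensurate {d : ℕ} (Γ₁ Γ₂ : AddSubgroup (Euc d)) : Prop :=
  ((Γ₁ ⊓ Γ₂).addSubgroupOf Γ₁).FiniteIndex ∧ ((Γ₁ ⊓ Γ₂).addSubgroupOf Γ₂).FiniteIndex

/-- The image α·R(Γ) of Γ under the similarity transformation αR. -/
def simMap {d : ℕ} (α : ℝ) (R : Euc d ≃ₗᵢ[ℝ] Euc d) (Γ : AddSubgroup (Euc d)) :
    AddSubgroup (Euc d) :=
  Γ.map (α • R.toLinearEquiv.toLinearMap).toAddMonoidHom

/-- The image R(Γ). -/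
def rotMap {d : ℕ} (R : Euc d ≃ₗᵢ[ℝ] Euc d) (Γ : AddSubgroup (Euc d)) :
    AddSubgroup (Euc d) :=
  Γ.map R.toLinearEquiv.toLinearMap.toAddMonoidHom

/-- The set of similarity isometries of Γ. -/
def OSset {d : ℕ} (Γ : AddSubgroup (Euc d)) : Set (Euc d ≃ₗᵢ[ℝ] Euc d) :=
  {R | ∃ α : ℝ, 0 < α ∧ simMap α R Γ ≤ Γ}

/-- The set of scaling factors of R, Scal_Γ(R) = {α : αRΓ ⊆ Γ}. -/
def Scal {d : ℕ} (Γ : AddSubgroup (Euc d)) (R : Euc d ≃ₗᵢ[ℝ] Euc d) : Set ℝ :=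
  {α | simMap α R Γ ≤ Γ}

/-- δ is the denominator of R: the smallest positive element of Scal Γ R. -/
def IsDen {d : ℕ} (Γ : AddSubgroup (Euc d)) (R : Euc d ≃ₗᵢ[ℝ] Euc d) (δ : ℝ) : Prop :=
  0 < δ ∧ δ ∈ Scal Γ R ∧ ∀ β : ℝ, 0 < β → β ∈ Scal Γ R → δ ≤ β

/-- The set of coincidence isometries of Γ. -/
def OCset {d : ℕ} (Γ : AddSubgroup (Euc d)) : Set (Euc d ≃ₗᵢ[ℝ] Euc d) :=
  {R | Commensurate Γ (rotMap R Γ)}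

/-- The coincidence index Σ_Γ(R) = [Γ : Γ ∩ RΓ]. -/
def coinIndex {d : ℕ} (Γ : AddSubgroup (Euc d)) (R : Euc d ≃ₗᵢ[ℝ] Euc d) : ℕ :=
  (rotMap R Γ).relIndex Γ

/-- The coincidence site lattice Γ(R) = Γ ∩ RΓ. -/
def CSL {d : ℕ} (Γ : AddSubgroup (Euc d)) (R : Euc d ≃ₗᵢ[ℝ] Euc d) :
    AddSubgroup (Euc d) :=
  Γ ⊓ rotMap R Γ

/-- The dual lattice Γ* = {x : ⟨x,y⟩ ∈ ℤ for all y ∈ Γ}. -/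
def dualLattice {d : ℕ} (Γ : AddSubgroup (Euc d)) : AddSubgroup (Euc d) where
  carrier := {x | ∀ y ∈ Γ, ∃ n : ℤ, (inner ℝ x y : ℝ) = (n : ℝ)}
  zero_mem' := by
    intro y hy
    exact ⟨0, by simp⟩
  add_mem' := by
    intro a b ha hb y hy
    obtain ⟨n, hn⟩ := ha y hy
    obtain ⟨m, hm⟩ := hb y hy
    exact ⟨n + m, by rw [inner_add_left, hn, hm]; push_cast; ring⟩
  neg_mem' := by
    intro a ha y hy
    obtain ⟨n, hn⟩ := ha y hy
    exact ⟨-n, by rw [inner_neg_left, hn]; push_cast; ring⟩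

/-!
Write `Λ = Γ ∩ RΓ` and `P = Γ + RΓ`. The scaling factors of `R` form a subgroup of `ℝ`, hence
equal `ℤδ`. In the plane `R⁻¹ = ±adj R`, so `R` and `R⁻¹` have the same scaling factors; thus both
indices `[Γ : Λ]` and `[RΓ : Λ]` are scaling factors of `R`, and `δ²Γ ⊆ Γ` gives `δ² ∈ ℤ`.
Since `δ` divides the nonzero integer `[RΓ : Λ]` and `δ² ∈ ℤ`, `δ` is an integer `m`.
Now `mP ⊆ Λ`, so `[Γ : Λ]·[RΓ : Λ] = [P : Λ]` divides `[P : mP] = [Γ : mΓ] = m²`,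
while both indices are at least `m`; hence both equal `m`.
-/

open Module Submodule

namespace AddSubgroup
variable {M : Type*} [AddCommGroup M]

lemma map_nsmul_le (S : AddSubgroup M) (n : ℕ) : S.map (nsmulAddMonoidHom n) ≤ S :=
  map_le_iff_le_comap.2 fun _ hx => nsmul_mem hx n

lemma relIndex_map_nsmul_of_le [IsAddTorsionFree M] {H K : AddSubgroup M} (hHK : H ≤ K)
    (hHK' : H.relIndex K ≠ 0) {n : ℕ} (hn : n ≠ 0) :
    (K.map (nsmulAddMonoidHom n)).relIndex K = (H.map (nsmulAddMonoidHom n)).relIndex H := by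
  have hmap : (H.map (nsmulAddMonoidHom n)).relIndex (K.map (nsmulAddMonoidHom n)) =
      H.relIndex K := relIndex_map_map_of_injective H K (nsmul_right_injective hn)
  refine Nat.eq_of_mul_eq_mul_left (Nat.pos_of_ne_zero hHK') ?_
  calc H.relIndex K * (K.map (nsmulAddMonoidHom n)).relIndex K
      = (H.map (nsmulAddMonoidHom n)).relIndex K := by
        rw [← hmap, relIndex_mul_relIndex _ _ _ (map_mono hHK) (K.map_nsmul_le n)]
    _ = H.relIndex K * (H.map (nsmulAddMonoidHom n)).relIndex H := by
        rw [← relIndex_mul_relIndex _ _ _ (H.map_nsmul_le n) hHK, mul_comm]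

lemma relIndex_mul_relIndex_dvd_relIndex_map_nsmul {H K : AddSubgroup M} {n : ℕ}
    (hH : ∀ x ∈ H, n • x ∈ K) (hK : ∀ x ∈ K, n • x ∈ H) :
    K.relIndex H * H.relIndex K ∣ ((H ⊔ K).map (nsmulAddMonoidHom n)).relIndex (H ⊔ K) := by
  have hle : (H ⊔ K).map (nsmulAddMonoidHom n) ≤ H ⊓ K := by
    rintro _ ⟨_, hx, rfl⟩
    obtain ⟨y, hy, z, hz, rfl⟩ := mem_sup.1 hx
    simp only [nsmulAddMonoidHom_apply, smul_add]
    exact ⟨add_mem (nsmul_mem hy n) (hK z hz), add_mem (hH y hy) (nsmul_mem hz n)⟩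
  have hinf : (H ⊓ K).relIndex (H ⊔ K) = K.relIndex H * H.relIndex K := by
    rw [← relIndex_mul_relIndex _ _ _ inf_le_left le_sup_left, inf_relIndex_left,
      relIndex_sup_left]
  rw [← hinf, ← relIndex_mul_relIndex _ _ _ hle (inf_le_left.trans le_sup_left)]
  exact dvd_mul_left _ _

end AddSubgroup

lemma Real.exists_int_eq_of_sq_eq_of_mul_eq {x : ℝ} {n k s : ℤ} (hk : k ≠ 0) (hx : x ^ 2 = n)
    (hkx : k * x = s) : ∃ q : ℤ, x = q := by
  have hsq : k ^ 2 * n = s ^ 2 := by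
    exact_mod_cast (show (k : ℝ) ^ 2 * n = s ^ 2 by rw [← hx, ← hkx]; ring)
  obtain ⟨q, rfl⟩ := (Int.pow_dvd_pow_iff two_ne_zero).1 (Dvd.intro n hsq)
  refine ⟨q, mul_left_cancel₀ (Int.cast_ne_zero.2 hk) ?_⟩
  rw [hkx]; push_cast; rfl

lemma Nat.eq_of_le_of_le_of_mul_dvd_sq {m s t : ℕ} (hm : 0 < m) (hs : m ≤ s) (ht : m ≤ t)
    (h : s * t ∣ m ^ 2) : s = m := by
  have := Nat.le_of_dvd (by positivity) h
  nlinarith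

lemma LinearIsometryEquiv.det_eq_one_or_neg_one {E : Type*} [NormedAddCommGroup E]
    [InnerProductSpace ℝ E] [FiniteDimensional ℝ E] (R : E ≃ₗᵢ[ℝ] E) :
    LinearMap.det (R : E →ₗ[ℝ] E) = 1 ∨ LinearMap.det (R : E →ₗ[ℝ] E) = -1 := by
  let o := stdOrthonormalBasis ℝ E
  have h := o.det_to_matrix_orthonormalBasis_real (o.map R)
  have hdet := o.toBasis.det_comp (R : E →ₗ[ℝ] E) o.toBasis
  rw [o.toBasis.det_self, mul_one] at hdet
  rw [OrthonormalBasis.coe_map, ← o.coe_toBasis] at h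
  rwa [← hdet]

lemma Matrix.smul_inv_apply_mem_of_fin_two {K : Type*} [Field K] (S : Subring K)
    {A : Matrix (Fin 2) (Fin 2) K} (hA : A.det⁻¹ ∈ S) {α : K} (h : ∀ i j, (α • A) i j ∈ S) :
    ∀ i j, (α • A⁻¹) i j ∈ S := by
  have hadj : ∀ i j, (α • A.adjugate) i j ∈ S := by
    simp only [Matrix.smul_apply, smul_eq_mul] at h
    intro i j
    fin_cases i <;> fin_cases j <;> simp [Matrix.adjugate_fin_two, h, S.neg_mem]
  intro i j
  rw [Matrix.inv_def, Ring.inverse_eq_inv', smul_comm, Matrix.smul_apply, smul_eq_mul]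
  exact S.mul_mem hA (hadj i j)

lemma Module.Basis.relIndex_map_nsmul_span {K V ι : Type*} [Field K] [CharZero K]
    [AddCommGroup V] [Module K V] [Fintype ι] (b : Basis ι K V) (n : ℕ) :
    ((span ℤ (Set.range b)).toAddSubgroup.map (nsmulAddMonoidHom n)).relIndex
      (span ℤ (Set.range b)).toAddSubgroup = n ^ Fintype.card ι := by
  let bℤ : Basis ι ℤ (span ℤ (Set.range b)).toAddSubgroup.toIntSubmodule := b.restrictScalars ℤ
  have : Module.Free ℤ (span ℤ (Set.range b)).toAddSubgroup.toIntSubmodule := .of_basis bℤ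
  have : Module.Finite ℤ (span ℤ (Set.range b)).toAddSubgroup.toIntSubmodule := .of_basis bℤ
  rw [AddSubgroup.relIndex_map_nsmul, ← finrank_eq_card_basis bℤ]
  rfl

section Scal

variable {d : ℕ} {Γ : AddSubgroup (Euc d)} {R : Euc d ≃ₗᵢ[ℝ] Euc d} {α : ℝ}

lemma mem_scal_iff : α ∈ Scal Γ R ↔ ∀ x ∈ Γ, α • R x ∈ Γ := by
  simp [Scal, simMap, SetLike.le_def]

lemma mem_rotMap_iff {x : Euc d} : x ∈ rotMap R Γ ↔ R.symm x ∈ Γ := by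
  constructor
  · rintro ⟨y, hy, rfl⟩
    simpa using hy
  · exact fun h => ⟨_, h, by simp⟩

lemma mem_scal_iff_forall_mem_rotMap : α ∈ Scal Γ R ↔ ∀ x ∈ rotMap R Γ, α • x ∈ Γ := by
  rw [mem_scal_iff]
  exact ⟨fun h x hx => by simpa using h _ (mem_rotMap_iff.1 hx),
    fun h x hx => h _ (by simpa [mem_rotMap_iff])⟩

lemma mem_scal_symm_iff : α ∈ Scal Γ R.symm ↔ ∀ x ∈ Γ, α • x ∈ rotMap R Γ := by
  simp [mem_scal_iff, mem_rotMap_iff]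

variable (Γ R) in
def scalAddSubgroup : AddSubgroup ℝ where
  carrier := Scal Γ R
  zero_mem' := mem_scal_iff.2 fun _ _ => by simp
  add_mem' ha hb := mem_scal_iff.2 fun x hx => by
    rw [add_smul]
    exact Γ.add_mem (mem_scal_iff.1 ha x hx) (mem_scal_iff.1 hb x hx)
  neg_mem' ha := mem_scal_iff.2 fun x hx => by
    rw [neg_smul]
    exact Γ.neg_mem (mem_scal_iff.1 ha x hx)

lemma IsDen.mem_zmultiples {δ : ℝ} (hδ : IsDen Γ R δ) (hα : α ∈ Scal Γ R) :
    α ∈ AddSubgroup.zmultiples δ := by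
  have h : scalAddSubgroup Γ R = AddSubgroup.closure {δ} :=
    AddSubgroup.cyclic_of_min ⟨⟨hδ.2.1, hδ.1⟩, fun β hβ => hδ.2.2 β hβ.2 hβ.1⟩
  rw [AddSubgroup.zmultiples_eq_closure, ← h]
  exact hα

lemma natCast_relIndex_rotMap_mem_scal : ((Γ.relIndex (rotMap R Γ) : ℕ) : ℝ) ∈ Scal Γ R :=
  mem_scal_iff_forall_mem_rotMap.2 fun _ hx => by
    rw [Nat.cast_smul_eq_nsmul]
    exact Γ.nsmul_relIndex_mem hx

lemma natCast_coinIndex_mem_scal_symm : (coinIndex Γ R : ℝ) ∈ Scal Γ R.symm :=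
  mem_scal_symm_iff.2 fun _ hx => by
    rw [Nat.cast_smul_eq_nsmul]
    exact (rotMap R Γ).nsmul_relIndex_mem hx

lemma relIndex_rotMap_ne_zero (hR : R ∈ OCset Γ) : Γ.relIndex (rotMap R Γ) ≠ 0 := by
  rw [← AddSubgroup.inf_relIndex_right]
  exact hR.2.index_ne_zero

lemma mem_scal_span_iff {ι : Type*} [Fintype ι] [DecidableEq ι] (b : Basis ι ℝ (Euc d)) :
    α ∈ Scal (span ℤ (Set.range b)).toAddSubgroup R ↔
      ∀ i j, (α • LinearMap.toMatrix b b R) i j ∈ (algebraMap ℤ ℝ).range := by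
  rw [Scal, Set.mem_ofPred_eq, simMap, AddSubgroup.map_le_iff_le_comap,
    span_int_eq_addSubgroupClosure, AddSubgroup.closure_le, Set.range_subset_iff, forall_comm]
  simp [← span_int_eq_addSubgroupClosure, b.mem_span_iff_repr_mem ℤ, LinearMap.toMatrix_apply]

lemma sq_mem_of_mem_scal_of_mem_scal_symm [NeZero d] (hΓ : IsLattice Γ) (h : α ∈ Scal Γ R)
    (h' : α ∈ Scal Γ R.symm) : α ^ 2 ∈ (algebraMap ℤ ℝ).range := by
  obtain ⟨b, rfl⟩ := hΓ
  have hb : b 0 ∈ (span ℤ (Set.range b)).toAddSubgroup := subset_span ⟨0, rfl⟩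
  have hsq := mem_scal_iff_forall_mem_rotMap.1 h _ (mem_scal_symm_iff.1 h' _ hb)
  simpa [sq, smul_smul] using (b.mem_span_iff_repr_mem ℤ _).1 hsq 0

end Scal

section Planar

variable {Γ : AddSubgroup (Euc 2)} {R : Euc 2 ≃ₗᵢ[ℝ] Euc 2} {α : ℝ}

lemma mem_scal_symm_of_mem_scal (hΓ : IsLattice Γ) (h : α ∈ Scal Γ R) : α ∈ Scal Γ R.symm := by
  obtain ⟨b, rfl⟩ := hΓ
  rw [mem_scal_span_iff] at h ⊢
  have hinv : LinearMap.toMatrix b b R.symm = (LinearMap.toMatrix b b R)⁻¹ := by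
    refine (Matrix.inv_eq_left_inv ?_).symm
    rw [← LinearMap.toMatrix_comp, ← LinearMap.toMatrix_id b]
    congr 1
    ext
    simp
  have hdet : (LinearMap.toMatrix b b R).det⁻¹ ∈ (algebraMap ℤ ℝ).range := by
    rw [LinearMap.det_toMatrix]
    rcases R.det_eq_one_or_neg_one with h1 | h1
    · exact ⟨1, by simp [h1]⟩
    · exact ⟨-1, by simp [h1]⟩
  rw [hinv]
  exact Matrix.smul_inv_apply_mem_of_fin_two _ hdet h

lemma IsDen.exists_natCast_eq (hΓ : IsLattice Γ) (hR : R ∈ OCset Γ) {δ : ℝ}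
    (hδ : IsDen Γ R δ) : ∃ m : ℕ, δ = m := by
  obtain ⟨k, hk⟩ := AddSubgroup.mem_zmultiples_iff.1
    (hδ.mem_zmultiples natCast_relIndex_rotMap_mem_scal)
  obtain ⟨n, hn⟩ := sq_mem_of_mem_scal_of_mem_scal_symm hΓ hδ.2.1
    (mem_scal_symm_of_mem_scal hΓ hδ.2.1)
  have hk0 : k ≠ 0 := by
    rintro rfl
    rw [zero_smul, eq_comm, Nat.cast_eq_zero] at hk
    exact relIndex_rotMap_ne_zero hR hk
  obtain ⟨q, rfl⟩ := Real.exists_int_eq_of_sq_eq_of_mul_eq (s := Nat.cast _) hk0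
    (by simpa using hn.symm) (by simpa using hk)
  lift q to ℕ using (by exact_mod_cast hδ.1.le)
  exact ⟨q, rfl⟩

lemma coinIndex_mul_relIndex_rotMap_dvd_sq (hΓ : IsLattice Γ) (hR : R ∈ OCset Γ) {m : ℕ}
    (hm : m ≠ 0) (h : (m : ℝ) ∈ Scal Γ R) :
    coinIndex Γ R * Γ.relIndex (rotMap R Γ) ∣ m ^ 2 := by
  have : IsAddTorsionFree (Euc 2) := .of_isTorsionFree ℝ _
  have hdvd := AddSubgroup.relIndex_mul_relIndex_dvd_relIndex_map_nsmul (H := Γ)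
    (K := rotMap R Γ) (n := m)
    (fun x hx => by
      rw [← Nat.cast_smul_eq_nsmul ℝ]
      exact mem_scal_symm_iff.1 (mem_scal_symm_of_mem_scal hΓ h) x hx)
    (fun x hx => by
      rw [← Nat.cast_smul_eq_nsmul ℝ]
      exact mem_scal_iff_forall_mem_rotMap.1 h x hx)
  obtain ⟨b, rfl⟩ := hΓ
  rwa [AddSubgroup.relIndex_map_nsmul_of_le le_sup_left
    (by rw [AddSubgroup.relIndex_sup_left]; exact relIndex_rotMap_ne_zero hR) hm,
    b.relIndex_map_nsmul_span, Fintype.card_fin] at hdvd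

end Planar

theorem coinIndex_eq_den_planar (Γ : AddSubgroup (Euc 2)) (hΓ : IsLattice Γ)
    (R : Euc 2 ≃ₗᵢ[ℝ] Euc 2) (hR : R ∈ OCset Γ)
    (δ : ℝ) (hδ : IsDen Γ R δ) :
    (coinIndex Γ R : ℝ) = δ := by
  obtain ⟨m, rfl⟩ := hδ.exists_natCast_eq hΓ hR
  obtain ⟨hm_pos, hm_scal, hmin⟩ := hδ
  have hm : m ≠ 0 := by exact_mod_cast hm_pos.ne'
  have hdvd := coinIndex_mul_relIndex_rotMap_dvd_sq hΓ hR hm hm_scal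
  have hS1 : coinIndex Γ R ≠ 0 :=
    left_ne_zero_of_mul (ne_zero_of_dvd_ne_zero (pow_ne_zero 2 hm) hdvd)
  have hS2 := relIndex_rotMap_ne_zero hR
  have hle₁ : (m : ℝ) ≤ coinIndex Γ R := hmin _ (Nat.cast_pos.2 (Nat.pos_of_ne_zero hS1)) (by
    simpa using mem_scal_symm_of_mem_scal hΓ (natCast_coinIndex_mem_scal_symm (R := R)))
  have hle₂ : (m : ℝ) ≤ Γ.relIndex (rotMap R Γ) :=
    hmin _ (Nat.cast_pos.2 (Nat.pos_of_ne_zero hS2)) natCast_relIndex_rotMap_mem_scal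
  exact_mod_cast Nat.eq_of_le_of_le_of_mul_dvd_sq (Nat.pos_of_ne_zero hm)
    (by exact_mod_cast hle₁) (by exact_mod_cast hle₂) hdvd
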